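/- arXiv:2512.18335 — 2 statements merged into one kernel-verified Lean document; each statement's English description precedes it below -/
import Mathlib

section
/- Let X be a finite subset of α with n = |X| ≥ 3 so that I = I(n) ≥ 2. Let x⁺ ∈ α with x⁺ ∉ X and let x⁻ ∈ X, and suppose x⁺ < x_(I−1) and x_(I) ≤ x⁻. Set X' = (X \ {x⁻}) ∪ {x⁺}, so |X'| = n and the median index is unchanged. Then L(X') = ({x⁺} ∪ L(X)) \ {x_(I−1)} and R(X') = ({x_(I−1)} ∪ R(X)) \ {x⁻}. -/
open Finset

/-- Median index `I(n) = ⌈n/2⌉`. -/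
def medianIdx (n : ℕ) : ℕ := (n + 1) / 2

/-- 1-indexed rank of `x` in `X`: the number of elements of `X` that are `≤ x`.
For `x ∈ X`, `rank X x = i` means `x` is the `i`-th smallest element of `X`. -/
def rank {α : Type*} [LinearOrder α] (X : Finset α) (x : α) : ℕ :=
  (X.filter (fun y => y ≤ x)).card

/-- Left part of the median partition: elements of rank `< I(|X|)`. -/
def medL {α : Type*} [LinearOrder α] (X : Finset α) : Finset α :=
  X.filter (fun x => rank X x < medianIdx X.card)

/-- Right part of the median partition: elements of rank `≥ I(|X|)`. -/
def medR {α : Type*} [LinearOrder α] (X : Finset α) : Finset α :=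
  X.filter (fun x => medianIdx X.card ≤ rank X x)

/-!
Since `rank X` is strictly increasing on `X`, the left part of the median partition is the set
of elements below the element of rank `I`, and the right part the set of elements at or above it.
Replacing `x⁻ ≥ x_(I)` by `x⁺ < x_(I-1)` raises the rank of `x_(I-1)` by one without changing
`|X|`, so in `X'` the cut falls just below `x_(I-1)` instead of just below `x_(I)`.
-/

section Rank

variable {α : Type*} [LinearOrder α] {X : Finset α} {a b : α}

lemma rank_mono (X : Finset α) : Monotone (rank X) :=
  fun _ _ h => card_le_card (monotone_filter_right X fun _ _ hy => le_trans hy h)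

lemma rank_pos_of_mem (ha : a ∈ X) : 0 < rank X a :=
  card_pos.mpr ⟨a, mem_filter.mpr ⟨ha, le_rfl⟩⟩

lemma rank_lt_rank (hb : b ∈ X) (h : a < b) : rank X a < rank X b := by
  refine card_lt_card ⟨monotone_filter_right X fun _ _ hy => hy.trans h.le, fun hsub => ?_⟩
  exact h.not_ge (mem_filter.mp (hsub (mem_filter.mpr ⟨hb, le_rfl⟩))).2

lemma rank_le_rank_iff (ha : a ∈ X) : rank X a ≤ rank X b ↔ a ≤ b :=
  ⟨fun h => not_lt.mp fun hba => (rank_lt_rank ha hba).not_ge h, fun h => rank_mono X h⟩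

lemma rank_lt_rank_iff (hb : b ∈ X) : rank X a < rank X b ↔ a < b := by
  simpa only [not_le] using (rank_le_rank_iff hb).not

lemma rank_insert_erase {c : α} (hb : b ∉ X) (hba : b ≤ a) (hac : a < c) :
    rank (insert b (X.erase c)) a = rank X a + 1 := by
  have hc : c ∉ X.filter (· ≤ a) := fun h => hac.not_ge (mem_filter.mp h).2
  rw [rank, filter_insert, if_pos hba, filter_erase, erase_eq_of_notMem hc,
    card_insert_of_notMem fun h => hb (mem_filter.mp h).1]
  rfl

end Rank

section MedianPartition

variable {α : Type*} [LinearOrder α] {X : Finset α} {a : α}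

lemma medL_eq_filter_lt (ha : a ∈ X) (h : rank X a = medianIdx X.card) :
    medL X = X.filter (· < a) := by
  ext y
  simp only [medL, mem_filter, ← h]
  exact and_congr_right fun _ => rank_lt_rank_iff ha

lemma medR_eq_filter_le (ha : a ∈ X) (h : rank X a = medianIdx X.card) :
    medR X = X.filter (a ≤ ·) := by
  ext y
  simp only [medR, mem_filter, ← h]
  exact and_congr_right fun _ => rank_le_rank_iff ha

end MedianPartition

theorem median_replace_left_right_general {α : Type*} [LinearOrder α]
    (X : Finset α)
    (xIm1 : α) (hxIm1 : xIm1 ∈ X) (hrankm1 : rank X xIm1 = medianIdx X.card - 1)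
    (xI : α) (hxI : xI ∈ X) (hrankI : rank X xI = medianIdx X.card)
    (xp : α) (hxp : xp ∉ X) (xm : α) (hxm : xm ∈ X)
    (hplt : xp < xIm1) (hmge : xI ≤ xm)
    (X' : Finset α) (hX' : X' = (X \ {xm}) ∪ {xp}) :
    medL X' = (insert xp (medL X)) \ {xIm1} ∧
    medR X' = (insert xIm1 (medR X)) \ {xm} := by
  rw [sdiff_singleton_eq_erase, union_singleton] at hX'
  have hrank_succ : rank X xI = rank X xIm1 + 1 := by
    have := rank_pos_of_mem hxI
    omega
  have hlt : xIm1 < xI := (rank_lt_rank_iff hxI).mp (by omega)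
  have hlt_xm : xIm1 < xm := hlt.trans_le hmge
  have hlt_xI_iff : ∀ y ∈ X, y < xI ↔ y ≤ xIm1 := fun y hy => by
    rw [← rank_lt_rank_iff hxI, ← rank_le_rank_iff hy]
    omega
  have hcard : X'.card = X.card := by
    rw [hX', card_insert_of_notMem fun h => hxp (mem_of_mem_erase h), card_erase_add_one hxm]
  have hmem' : xIm1 ∈ X' := hX' ▸ mem_insert_of_mem (mem_erase.mpr ⟨hlt_xm.ne, hxIm1⟩)
  have hrank' : rank X' xIm1 = medianIdx X'.card := by
    rw [hcard, hX', rank_insert_erase hxp hplt.le hlt_xm, ← hrank_succ, hrankI]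
  rw [medL_eq_filter_lt hmem' hrank', medR_eq_filter_le hmem' hrank',
    medL_eq_filter_lt hxI hrankI, medR_eq_filter_le hxI hrankI, hX']
  constructor <;> ext y <;> grind [hlt_xI_iff y]

theorem median_replace_left_right {α : Type*} [LinearOrder α]
    (X : Finset α) (hn : 3 ≤ X.card)
    (xIm1 : α) (hxIm1 : xIm1 ∈ X) (hrankm1 : rank X xIm1 = medianIdx X.card - 1)
    (xI : α) (hxI : xI ∈ X) (hrankI : rank X xI = medianIdx X.card)
    (xp : α) (hxp : xp ∉ X) (xm : α) (hxm : xm ∈ X)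
    (hplt : xp < xIm1) (hmge : xI ≤ xm)
    (X' : Finset α) (hX' : X' = (X \ {xm}) ∪ {xp}) :
    medL X' = (insert xp (medL X)) \ {xIm1} ∧
    medR X' = (insert xIm1 (medR X)) \ {xm} :=
  median_replace_left_right_general X xIm1 hxIm1 hrankm1 xI hxI hrankI xp hxp xm hxm hplt hmge X'
    hX'
end

section
/- Let X be a finite subset of α with n = |X| even and n ≥ 2, write I = I(n), and let x⁻ ∈ L(X). Set X' = X \ {x⁻}. Then L(X') = (L(X) \ {x⁻}) ∪ {x_(I)} and R(X') = R(X) \ {x_(I)}. -/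
open Finset

lemma rank_le_rank_iff_s14 {α : Type*} [LinearOrder α] {X : Finset α} {x y : α}
    (hx : x ∈ X) (_hy : y ∈ X) : rank X x ≤ rank X y ↔ x ≤ y := by
  constructor
  · intro h
    by_contra hxy
    push_neg at hxy
    have hss : X.filter (fun z => z ≤ y) ⊂ X.filter (fun z => z ≤ x) := by
      constructor
      · intro z hz
        simp only [mem_filter] at hz ⊢
        exact ⟨hz.1, hz.2.trans hxy.le⟩
      · intro hsub
        have : x ∈ X.filter (fun z => z ≤ y) := hsub (by simp [hx])
        simp only [mem_filter] at this
        exact absurd this.2 (not_le.mpr hxy)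
    exact absurd (Finset.card_lt_card hss) (not_lt.mpr h)
  · intro h
    apply Finset.card_le_card
    intro z hz
    simp only [mem_filter] at hz ⊢
    exact ⟨hz.1, hz.2.trans h⟩

lemma rank_inj {α : Type*} [LinearOrder α] {X : Finset α} {x y : α}
    (hx : x ∈ X) (hy : y ∈ X) (h : rank X x = rank X y) : x = y :=
  le_antisymm ((rank_le_rank_iff_s14 hx hy).mp h.le) ((rank_le_rank_iff_s14 hy hx).mp h.ge)

lemma rank_sdiff {α : Type*} [LinearOrder α] {X : Finset α} {xm x : α}
    (hm : xm ∈ X) (_hx : x ∈ X) (_hne : x ≠ xm) :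
    rank X x = rank (X \ {xm}) x + (if xm ≤ x then 1 else 0) := by
  have key : X.filter (fun y => y ≤ x) =
      (X \ {xm}).filter (fun y => y ≤ x) ∪ (({xm} : Finset α).filter (fun y => y ≤ x)) := by
    rw [← Finset.filter_union, Finset.sdiff_union_self_eq_union,
      Finset.union_eq_left.mpr (by simpa using hm)]
  unfold rank
  rw [key, Finset.card_union_of_disjoint (Finset.disjoint_filter_filter Finset.sdiff_disjoint)]
  congr 1
  by_cases h : xm ≤ x <;> simp [Finset.filter_singleton, h]

theorem median_delete_even_left {α : Type*} [LinearOrder α]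
    (X : Finset α) (hn : 2 ≤ X.card) (heven : Even X.card)
    (xI : α) (hxI : xI ∈ X) (hrank : rank X xI = medianIdx X.card)
    (xm : α) (hxm : xm ∈ medL X)
    (X' : Finset α) (hX' : X' = X \ {xm}) :
    medL X' = (medL X \ {xm}) ∪ {xI} ∧ medR X' = medR X \ {xI} := by
  obtain ⟨k, hk⟩ := heven
  have hxmX : xm ∈ X := (Finset.mem_filter.mp hxm).1
  have hxmrk : rank X xm < medianIdx X.card := (Finset.mem_filter.mp hxm).2
  have hxmne : xm ≠ xI := by
    intro h; rw [h, hrank] at hxmrk; exact lt_irrefl _ hxmrk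
  have hcard' : X'.card = X.card - 1 := by
    rw [hX', Finset.card_sdiff_of_subset (by simpa using hxmX)]; simp
  have hI : medianIdx X'.card = medianIdx X.card := by
    rw [hcard']; unfold medianIdx; omega
  have hmem' : ∀ x, x ∈ X' ↔ x ∈ X ∧ x ≠ xm := by
    intro x; rw [hX']; simp [Finset.mem_sdiff]
  have hrs : ∀ x ∈ X, x ≠ xm → rank X x = rank X' x + (if xm ≤ x then 1 else 0) := by
    intro x hx hne; rw [hX']; exact rank_sdiff hxmX hx hne
  have hmI : xm ≤ xI := (rank_le_rank_iff_s14 hxmX hxI).mp (by rw [hrank]; exact hxmrk.le)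
  have hrI' : rank X' xI + 1 = medianIdx X.card := by
    have h1 := hrs xI hxI hxmne.symm
    rw [hrank] at h1
    simp only [hmI, if_true] at h1
    omega
  constructor
  · ext x
    simp only [medL, Finset.mem_filter, Finset.mem_union, Finset.mem_sdiff,
      Finset.mem_singleton, hI]
    constructor
    · rintro ⟨hx', hr'⟩
      have hxX : x ∈ X := ((hmem' x).mp hx').1
      have hxne : x ≠ xm := ((hmem' x).mp hx').2
      by_cases hxI' : x = xI
      · right; exact hxI'
      · left
        refine ⟨⟨hxX, ?_⟩, hxne⟩
        have h1 := hrs x hxX hxne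
        by_cases hle : xm ≤ x
        · simp only [hle, if_true] at h1
          have hle2 : rank X x ≤ medianIdx X.card := by omega
          rcases lt_or_eq_of_le hle2 with h | h
          · exact h
          · exact absurd (rank_inj hxX hxI (by rw [h, hrank])) hxI'
        · simp only [hle, if_false] at h1; omega
    · rintro (⟨⟨hxX, hr⟩, hxne⟩ | rfl)
      · refine ⟨(hmem' x).mpr ⟨hxX, hxne⟩, ?_⟩
        have h1 := hrs x hxX hxne
        split at h1 <;> omega
      · exact ⟨(hmem' x).mpr ⟨hxI, hxmne.symm⟩, by omega⟩
  · ext x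
    simp only [medR, Finset.mem_filter, Finset.mem_sdiff, Finset.mem_singleton, hI]
    constructor
    · rintro ⟨hx', hr'⟩
      have hxX : x ∈ X := ((hmem' x).mp hx').1
      have hxne : x ≠ xm := ((hmem' x).mp hx').2
      have h1 := hrs x hxX hxne
      have hxnI : x ≠ xI := by rintro rfl; omega
      refine ⟨⟨hxX, ?_⟩, hxnI⟩
      split at h1 <;> omega
    · rintro ⟨⟨hxX, hr⟩, hxnI⟩
      have hxne : x ≠ xm := by rintro rfl; omega
      have h1 := hrs x hxX hxne
      have hne' : rank X x ≠ medianIdx X.card := fun h =>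
        hxnI (rank_inj hxX hxI (h.trans hrank.symm))
      have hle : xm ≤ x := (rank_le_rank_iff_s14 hxmX hxX).mp (by omega)
      simp only [hle, if_true] at h1
      exact ⟨(hmem' x).mpr ⟨hxX, hxne⟩, by omega⟩
end
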